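/- arXiv:2302.12082 — 2 statements merged into one kernel-verified Lean document; each statement's English description precedes it below -/
import Mathlib

section
/- Let $\alpha, \beta \in \mathbb{C}$ be fixed. Then as real $z \to \infty$, $\frac{\Gamma(z+\alpha)}{\Gamma(z+\beta)} = z^{\alpha-\beta}\left(1 + \frac{(\alpha-\beta)(\alpha+\beta-1)}{2z} + O(z^{-2})\right)$. -/
/-!
Put `H(w) = Γ(w + α) / Γ(w + β) · w ^ (β - α)`. The functional equation of `Γ` gives
`H(w + 1) = exp (d w) · H(w)` with `d w = log (1 + α/w) - log (1 + β/w) + (β - α) log (1 + 1/w)`,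
and Taylor expansion of the logarithm gives `d w = -c / w² + O(w⁻³)`, `c = (α - β)(α + β - 1)/2`.
Euler's limit formula for `Γ` shows `H(z + n) → 1`, so telescoping gives
`H(z) = exp (-∑ₖ d (z + k))`. Since `∑ₖ (z + k)⁻² = 1/z + O(z⁻²)` and `∑ₖ (z + k)⁻³ = O(z⁻²)`,
the exponent is `c/z + O(z⁻²)`, and expanding the exponential gives the claim.
-/

open Filter Asymptotics Topology
open scoped Nat

section InvAddNatSeries

variable {z : ℝ}

theorem hasSum_inv_add_nat_mul_succ (hz : 0 < z) :
    HasSum (fun k : ℕ => ((z + k) * (z + k + 1))⁻¹) z⁻¹ := by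
  have hpos (k : ℕ) : 0 < z + k := by positivity
  have hsplit (k : ℕ) : ((z + k) * (z + k + 1))⁻¹ = (z + k)⁻¹ - (z + (k + 1 : ℕ))⁻¹ := by
    have := hpos k
    push_cast
    field_simp
    ring
  have hlim : Tendsto (fun k : ℕ => (z + k)⁻¹) atTop (𝓝 0) :=
    tendsto_inv_atTop_zero.comp (tendsto_atTop_add_const_left _ z tendsto_natCast_atTop_atTop)
  refine (hasSum_iff_tendsto_nat_of_nonneg (fun k => by have := hpos k; positivity) _).mpr ?_
  simp_rw [hsplit, Finset.sum_range_sub' (fun k : ℕ => (z + k)⁻¹)]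
  simpa using (tendsto_const_nhds (x := z⁻¹)).sub hlim

theorem inv_add_nat_succ_sq_le (hz : 0 < z) (k : ℕ) :
    (z + (k + 1 : ℕ))⁻¹ ^ 2 ≤ ((z + k) * (z + k + 1))⁻¹ := by
  have : 0 < z + k := by positivity
  rw [sq, mul_inv, mul_comm (z + k)⁻¹]
  push_cast
  rw [← add_assoc]
  exact mul_le_mul_of_nonneg_left (inv_anti₀ this (by linarith)) (by positivity)

theorem summable_inv_add_nat_sq (hz : 0 < z) : Summable fun k : ℕ => (z + k)⁻¹ ^ 2 :=
  (summable_nat_add_iff 1).mp <| (hasSum_inv_add_nat_mul_succ hz).summable.of_nonneg_of_le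
    (fun _ => by positivity) (inv_add_nat_succ_sq_le hz)

theorem inv_le_tsum_inv_add_nat_sq (hz : 0 < z) : z⁻¹ ≤ ∑' k : ℕ, (z + k)⁻¹ ^ 2 := by
  rw [← (hasSum_inv_add_nat_mul_succ hz).tsum_eq]
  refine (hasSum_inv_add_nat_mul_succ hz).summable.tsum_le_tsum (fun k => ?_)
    (summable_inv_add_nat_sq hz)
  have : 0 < z + k := by positivity
  rw [sq, mul_inv]
  exact mul_le_mul_of_nonneg_left (inv_anti₀ this (by linarith)) (by positivity)

theorem tsum_inv_add_nat_sq_le (hz : 0 < z) : ∑' k : ℕ, (z + k)⁻¹ ^ 2 ≤ z⁻¹ ^ 2 + z⁻¹ := by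
  have htail := ((summable_nat_add_iff 1).mpr (summable_inv_add_nat_sq hz)).tsum_le_tsum
    (inv_add_nat_succ_sq_le hz) (hasSum_inv_add_nat_mul_succ hz).summable
  rw [(hasSum_inv_add_nat_mul_succ hz).tsum_eq] at htail
  rw [(summable_inv_add_nat_sq hz).tsum_eq_zero_add, Nat.cast_zero, add_zero]
  exact add_le_add_right htail _

theorem isBigO_tsum_inv_add_nat_sq_sub_inv :
    (fun z : ℝ => ∑' k : ℕ, (z + k)⁻¹ ^ 2 - z⁻¹) =O[atTop] fun z => z⁻¹ ^ 2 := by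
  refine IsBigO.of_bound 1 ?_
  filter_upwards [eventually_gt_atTop 0] with z hz
  have h1 := inv_le_tsum_inv_add_nat_sq hz
  have h2 := tsum_inv_add_nat_sq_le hz
  rw [one_mul, Real.norm_of_nonneg (by linarith), Real.norm_of_nonneg (by positivity)]
  linarith

theorem inv_add_nat_pow_le (hz : 0 < z) (p k : ℕ) :
    (z + k)⁻¹ ^ (p + 2) ≤ z⁻¹ ^ p * (z + k)⁻¹ ^ 2 := by
  rw [pow_add]
  gcongr
  linarith [k.cast_nonneg (α := ℝ)]

theorem summable_inv_add_nat_pow (hz : 0 < z) (p : ℕ) :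
    Summable fun k : ℕ => (z + k)⁻¹ ^ (p + 2) :=
  ((summable_inv_add_nat_sq hz).mul_left _).of_nonneg_of_le (fun _ => by positivity)
    (inv_add_nat_pow_le hz p)

theorem tsum_inv_add_nat_pow_le (hz : 1 ≤ z) (p : ℕ) :
    ∑' k : ℕ, (z + k)⁻¹ ^ (p + 2) ≤ 2 * z⁻¹ ^ (p + 1) := by
  have hz0 : 0 < z := by linarith
  calc ∑' k : ℕ, (z + k)⁻¹ ^ (p + 2) ≤ ∑' k : ℕ, z⁻¹ ^ p * (z + k)⁻¹ ^ 2 :=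
        (summable_inv_add_nat_pow hz0 p).tsum_le_tsum (inv_add_nat_pow_le hz0 p)
          ((summable_inv_add_nat_sq hz0).mul_left _)
    _ ≤ z⁻¹ ^ p * (z⁻¹ ^ 2 + z⁻¹) := by
        rw [tsum_mul_left]; gcongr; exact tsum_inv_add_nat_sq_le hz0
    _ ≤ 2 * z⁻¹ ^ (p + 1) := by
        have : z⁻¹ ≤ 1 := inv_le_one_of_one_le₀ hz
        have : z⁻¹ ^ 2 ≤ z⁻¹ := by nlinarith [inv_pos.mpr hz0]
        calc z⁻¹ ^ p * (z⁻¹ ^ 2 + z⁻¹) ≤ z⁻¹ ^ p * (z⁻¹ + z⁻¹) := by gcongr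
          _ = 2 * z⁻¹ ^ (p + 1) := by ring

end InvAddNatSeries

section TsumCompAddNat

variable {E : Type*} [NormedAddCommGroup E] {f : ℝ → E} {q p : ℕ}

theorem exists_eventually_norm_comp_add_nat_le (hf : f =O[atTop] fun w => w⁻¹ ^ q) :
    ∃ C > 0, ∀ᶠ z in atTop, ∀ k : ℕ, ‖f (z + k)‖ ≤ C * (z + k)⁻¹ ^ q := by
  obtain ⟨C, hC, hfC⟩ := hf.exists_pos
  obtain ⟨w₀, hw₀⟩ := eventually_atTop.mp hfC.bound
  refine ⟨C, hC, ?_⟩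
  filter_upwards [eventually_ge_atTop (max w₀ 0)] with z hz k
  have hzk : max w₀ 0 ≤ z + k := by linarith [k.cast_nonneg (α := ℝ)]
  simpa [abs_of_nonneg (le_of_max_le_right hzk)] using hw₀ _ (le_of_max_le_left hzk)

theorem isBigO_tsum_comp_add_nat (hf : f =O[atTop] fun w => w⁻¹ ^ (p + 2)) :
    (fun z => ∑' k : ℕ, f (z + k)) =O[atTop] fun z => z⁻¹ ^ (p + 1) := by
  obtain ⟨C, hC, hfC⟩ := exists_eventually_norm_comp_add_nat_le hf
  refine IsBigO.of_bound (2 * C) ?_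
  filter_upwards [hfC, eventually_ge_atTop 1] with z hfz hz
  have hz0 : 0 < z := by linarith
  calc ‖∑' k : ℕ, f (z + k)‖ ≤ C * ∑' k : ℕ, (z + k)⁻¹ ^ (p + 2) :=
        tsum_of_norm_bounded ((summable_inv_add_nat_pow hz0 p).hasSum.mul_left C) hfz
    _ ≤ C * (2 * z⁻¹ ^ (p + 1)) := by gcongr; exact tsum_inv_add_nat_pow_le hz p
    _ = 2 * C * ‖z⁻¹ ^ (p + 1)‖ := by
        rw [Real.norm_of_nonneg (by positivity)]; ring

theorem eventually_summable_comp_add_nat [CompleteSpace E]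
    (hf : f =O[atTop] fun w => w⁻¹ ^ (p + 2)) :
    ∀ᶠ z in atTop, Summable fun k : ℕ => f (z + k) := by
  obtain ⟨C, -, hfC⟩ := exists_eventually_norm_comp_add_nat_le hf
  filter_upwards [hfC, eventually_gt_atTop 0] with z hfz hz
  exact Summable.of_norm_bounded ((summable_inv_add_nat_pow hz p).mul_left C) hfz

end TsumCompAddNat

namespace Complex

theorem logTaylor_three (x : ℂ) : logTaylor 3 x = x - x ^ 2 / 2 := by
  simp only [logTaylor, Finset.sum_range_succ, Finset.sum_range_zero]
  norm_num
  ring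

theorem isBigO_log_one_add_div_sub_logTaylor (γ : ℂ) :
    (fun w : ℝ => log (1 + γ / w) - logTaylor 3 (γ / w)) =O[atTop] fun w => w⁻¹ ^ 3 := by
  have hlim : Tendsto (fun w : ℝ => γ / w) atTop (𝓝 0) := by
    simpa [div_eq_mul_inv] using
      ((continuous_ofReal.tendsto 0).comp tendsto_inv_atTop_zero).const_mul γ
  refine ((log_sub_logTaylor_isBigO 2).comp_tendsto hlim).trans (IsBigO.of_bound (‖γ‖ ^ 3) ?_)
  filter_upwards with w
  simp [div_eq_mul_inv, mul_pow]

theorem isBigO_exp_sub_one_sub_self {ι : Type*} {l : Filter ι} {v : ι → ℂ} {g : ι → ℝ}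
    (hv : v =O[l] g) (hg : Tendsto g l (𝓝 0)) :
    (fun x => exp (v x) - 1 - v x) =O[l] fun x => g x ^ 2 := by
  have h := (exp_sub_sum_range_isBigO_pow 2).comp_tendsto (hv.trans_tendsto hg)
  simp only [Finset.sum_range_succ, Finset.sum_range_zero, pow_zero, pow_one, Nat.factorial_zero,
    Nat.factorial_one, Nat.cast_one, div_one, zero_add] at h
  exact (h.trans (hv.pow 2)).congr_left fun x => (sub_sub _ _ _).symm

theorem ofReal_add_ne_neg_natCast {x : ℝ} {γ : ℂ} (h : -γ.re < x) (m : ℕ) : (x : ℂ) + γ ≠ -m := by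
  intro hx
  have := congrArg re hx
  simp only [add_re, ofReal_re, neg_re, natCast_re] at this
  linarith [m.cast_nonneg (α := ℝ)]

theorem Gamma_add_nat_eq_mul_prod {s : ℂ} (hs : ∀ m : ℕ, s ≠ -m) (n : ℕ) :
    Gamma (s + n) = Gamma s * ∏ j ∈ Finset.range n, (s + j) := by
  induction n with
  | zero => simp
  | succ n ih =>
    have hsn : s + n ≠ 0 := fun h => hs n (eq_neg_of_add_eq_zero_left h)
    rw [Nat.cast_succ, ← add_assoc, Gamma_add_one _ hsn, ih, Finset.prod_range_succ]
    ring

theorem prod_range_add_natCast_ne_zero {s : ℂ} (hs : ∀ m : ℕ, s ≠ -m) (n : ℕ) :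
    ∏ j ∈ Finset.range n, (s + j) ≠ 0 :=
  Finset.prod_ne_zero_iff.mpr fun j _ h => hs j (eq_neg_of_add_eq_zero_left h)

theorem GammaSeq_ne_zero {s : ℂ} (hs : ∀ m : ℕ, s ≠ -m) {n : ℕ} (hn : n ≠ 0) :
    GammaSeq s n ≠ 0 := by
  have hfac : (n ! : ℂ) ≠ 0 := by exact_mod_cast n.factorial_ne_zero
  rw [GammaSeq]
  exact div_ne_zero (mul_ne_zero (by simp [hn]) hfac) (prod_range_add_natCast_ne_zero hs _)

theorem Gamma_add_nat_succ_eq_div_GammaSeq {s : ℂ} (hs : ∀ m : ℕ, s ≠ -m) {n : ℕ}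
    (hn : n ≠ 0) : Gamma (s + (n + 1 : ℕ)) = (n : ℂ) ^ s * n ! * Gamma s / GammaSeq s n := by
  have hfac : (n ! : ℂ) ≠ 0 := by exact_mod_cast n.factorial_ne_zero
  have hpow : (n : ℂ) ^ s ≠ 0 := by simp [hn]
  have hprod := prod_range_add_natCast_ne_zero hs (n + 1)
  rw [GammaSeq, Gamma_add_nat_eq_mul_prod hs]
  field_simp

theorem eq_exp_neg_tsum_of_tendsto_one {u d : ℕ → ℂ} (hu : ∀ n, u (n + 1) = exp (d n) * u n)
    (hd : Summable d) (hlim : Tendsto u atTop (𝓝 1)) : u 0 = exp (-∑' n, d n) := by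
  have hprod (n : ℕ) : u n = exp (∑ k ∈ Finset.range n, d k) * u 0 := by
    induction n with
    | zero => simp
    | succ n ih => rw [hu, ih, Finset.sum_range_succ, exp_add]; ring
  have hlim' : Tendsto (fun n => exp (∑ k ∈ Finset.range n, d k) * u 0) atTop
      (𝓝 (exp (∑' n, d n) * u 0)) :=
    ((continuous_exp.tendsto _).comp hd.hasSum.tendsto_sum_nat).mul_const _
  rw [exp_neg]
  exact eq_inv_of_mul_eq_one_right (tendsto_nhds_unique hlim' (hlim.congr hprod))

end Complex

open Complex

noncomputable def gammaRatioLogStep (α β : ℂ) (w : ℝ) : ℂ :=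
  log (1 + α / w) - log (1 + β / w) + (β - α) * log (1 + 1 / w)

theorem isBigO_gammaRatioLogStep_add (α β : ℂ) :
    (fun w => gammaRatioLogStep α β w + (α - β) * (α + β - 1) / 2 * (w : ℂ)⁻¹ ^ 2)
      =O[atTop] fun w => w⁻¹ ^ 3 := by
  have hR := isBigO_log_one_add_div_sub_logTaylor
  refine (((hR α).sub (hR β)).add ((hR 1).const_mul_left (β - α))).congr' ?_ .rfl
  filter_upwards [eventually_ne_atTop 0] with w hw
  have hw' : (w : ℂ) ≠ 0 := ofReal_ne_zero.mpr hw
  simp only [gammaRatioLogStep, logTaylor_three]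
  field_simp
  ring

noncomputable def normalizedGammaRatio (α β : ℂ) (w : ℝ) : ℂ :=
  Gamma (w + α) / Gamma (w + β) * (w : ℂ) ^ (β - α)

theorem exp_gammaRatioLogStep {α β : ℂ} {w : ℝ} (hw : 0 < w) (hα : (w : ℂ) + α ≠ 0)
    (hβ : (w : ℂ) + β ≠ 0) :
    exp (gammaRatioLogStep α β w) = (w + α) / (w + β) * (1 + 1 / w : ℂ) ^ (β - α) := by
  have hw' : (w : ℂ) ≠ 0 := ofReal_ne_zero.mpr hw.ne'
  have hne (γ : ℂ) (hγ : (w : ℂ) + γ ≠ 0) : 1 + γ / w ≠ 0 := by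
    rw [one_add_div hw']; exact div_ne_zero hγ hw'
  have h1 : (1 + 1 / w : ℂ) ≠ 0 := hne 1 (by exact_mod_cast (by linarith : w + 1 ≠ 0))
  rw [gammaRatioLogStep, exp_add, exp_sub, exp_log (hne α hα), exp_log (hne β hβ),
    cpow_def_of_ne_zero h1, mul_comm (log _)]
  field_simp

theorem normalizedGammaRatio_add_one {α β : ℂ} {w : ℝ} (hw : 0 < w) (hα : (w : ℂ) + α ≠ 0)
    (hβ : (w : ℂ) + β ≠ 0) :
    normalizedGammaRatio α β (w + 1) =
      exp (gammaRatioLogStep α β w) * normalizedGammaRatio α β w := by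
  have hshift (γ : ℂ) : ((w + 1 : ℝ) : ℂ) + γ = (w + γ) + 1 := by push_cast; ring
  have hpow : ((w + 1 : ℝ) : ℂ) ^ (β - α) = (w : ℂ) ^ (β - α) * (1 + 1 / w : ℂ) ^ (β - α) := by
    rw [show w + 1 = w * (1 + 1 / w) by field_simp, ofReal_mul,
      mul_cpow_ofReal_nonneg hw.le (by positivity) (β - α)]
    push_cast
    rfl
  rw [normalizedGammaRatio, normalizedGammaRatio, hshift, hshift, Gamma_add_one _ hα,
    Gamma_add_one _ hβ, hpow, exp_gammaRatioLogStep hw hα hβ]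
  simp only [div_eq_mul_inv, mul_inv]
  ring

theorem normalizedGammaRatio_add_nat_succ {α β : ℂ} {z : ℝ} (hz : 0 ≤ z)
    (hα : ∀ m : ℕ, (z : ℂ) + α ≠ -m) (hβ : ∀ m : ℕ, (z : ℂ) + β ≠ -m) {n : ℕ} (hn : n ≠ 0) :
    normalizedGammaRatio α β (z + (n + 1 : ℕ)) = Gamma (z + α) / Gamma (z + β) *
      (GammaSeq (z + β) n / GammaSeq (z + α) n) * (((z + (n + 1 : ℕ)) / n : ℝ) : ℂ) ^ (β - α) := by
  have hn0 : (0 : ℝ) < n := by positivity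
  have hn' : (n : ℂ) ≠ 0 := Nat.cast_ne_zero.mpr hn
  have hshift (γ : ℂ) : ((z + (n + 1 : ℕ) : ℝ) : ℂ) + γ = z + γ + (n + 1 : ℕ) := by
    push_cast; ring
  have hcpow : ((z + (n + 1 : ℕ) : ℝ) : ℂ) ^ (β - α) = (n : ℂ) ^ ((z : ℂ) + β) /
      (n : ℂ) ^ ((z : ℂ) + α) * (((z + (n + 1 : ℕ)) / n : ℝ) : ℂ) ^ (β - α) := by
    rw [← cpow_sub _ _ hn', show (z : ℂ) + β - (z + α) = β - α by ring, ← ofReal_natCast,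
      ← mul_cpow_ofReal_nonneg hn0.le (by positivity), ← ofReal_mul, mul_div_cancel₀ _ hn0.ne']
  have hnα : (n : ℂ) ^ ((z : ℂ) + α) ≠ 0 := by simp [hn']
  have hnβ : (n : ℂ) ^ ((z : ℂ) + β) ≠ 0 := by simp [hn']
  have hfac : (n ! : ℂ) ≠ 0 := by exact_mod_cast n.factorial_ne_zero
  have hGSα := GammaSeq_ne_zero hα hn
  have hGSβ := GammaSeq_ne_zero hβ hn
  rw [normalizedGammaRatio, hshift, hshift, Gamma_add_nat_succ_eq_div_GammaSeq hα hn,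
    Gamma_add_nat_succ_eq_div_GammaSeq hβ hn, hcpow]
  field_simp

theorem tendsto_normalizedGammaRatio_add_nat {α β : ℂ} {z : ℝ} (hz : 0 ≤ z)
    (hα : ∀ m : ℕ, (z : ℂ) + α ≠ -m) (hβ : ∀ m : ℕ, (z : ℂ) + β ≠ -m) :
    Tendsto (fun n : ℕ => normalizedGammaRatio α β (z + n)) atTop (𝓝 1) := by
  rw [← tendsto_add_atTop_iff_nat 1]
  have hΓα : Gamma (z + α) ≠ 0 := Gamma_ne_zero hα
  have hΓβ : Gamma (z + β) ≠ 0 := Gamma_ne_zero hβ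
  have hseq : Tendsto (fun n => Gamma (z + α) / Gamma (z + β) *
      (GammaSeq (z + β) n / GammaSeq (z + α) n)) atTop (𝓝 1) := by
    simpa [hΓα, hΓβ] using ((GammaSeq_tendsto_Gamma ((z : ℂ) + β)).div
      (GammaSeq_tendsto_Gamma _) hΓα).const_mul (Gamma (z + α) / Gamma (z + β))
  have hratio : Tendsto (fun n : ℕ => (z + (n + 1 : ℕ)) / (n : ℝ)) atTop (𝓝 1) := by
    have h0 : Tendsto (fun n : ℕ => 1 + (z + 1) / n) atTop (𝓝 1) := by
      simpa using (tendsto_const_div_atTop_nhds_zero_nat (z + 1)).const_add 1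
    refine h0.congr' ?_
    filter_upwards [eventually_ne_atTop 0] with n hn
    field_simp
    push_cast
    ring
  have hpow : Tendsto (fun n : ℕ => (((z + (n + 1 : ℕ)) / n : ℝ) : ℂ) ^ (β - α)) atTop
      (𝓝 1) := by
    have := (continuousAt_cpow_const (b := β - α) (by simp : ((1 : ℝ) : ℂ) ∈ slitPlane)).tendsto
      |>.comp ((continuous_ofReal.tendsto 1).comp hratio)
    simpa [Function.comp_def] using this
  have hlim := hseq.mul hpow
  rw [mul_one] at hlim
  refine hlim.congr' ?_
  filter_upwards [eventually_ne_atTop 0] with n hn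
  exact (normalizedGammaRatio_add_nat_succ hz hα hβ hn).symm

theorem hasSum_mul_ofReal_inv_add_nat_sq (c : ℂ) {z : ℝ} (hz : 0 < z) :
    HasSum (fun k : ℕ => c * ((z + k : ℝ) : ℂ)⁻¹ ^ 2) (c * ∑' k : ℕ, (z + k)⁻¹ ^ 2) := by
  simpa using (hasSum_ofReal.mpr (summable_inv_add_nat_sq hz).hasSum).mul_left c

theorem eventually_summable_gammaRatioLogStep_comp_add_nat (α β : ℂ) :
    ∀ᶠ z in atTop, Summable fun k : ℕ => gammaRatioLogStep α β (z + k) := by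
  filter_upwards [eventually_summable_comp_add_nat (p := 1) (isBigO_gammaRatioLogStep_add α β),
    eventually_gt_atTop 0] with z hsum hz
  simpa using
    hsum.sub (hasSum_mul_ofReal_inv_add_nat_sq ((α - β) * (α + β - 1) / 2) hz).summable

theorem isBigO_tsum_gammaRatioLogStep_add (α β : ℂ) :
    (fun z => ∑' k : ℕ, gammaRatioLogStep α β (z + k) + (α - β) * (α + β - 1) / 2 * (z : ℂ)⁻¹)
      =O[atTop] fun z => z⁻¹ ^ 2 := by
  have hstep := isBigO_gammaRatioLogStep_add α β
  have hsq := (isBigO_ofReal_left.mpr isBigO_tsum_inv_add_nat_sq_sub_inv).const_mul_left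
    ((α - β) * (α + β - 1) / 2)
  refine ((isBigO_tsum_comp_add_nat (p := 1) hstep).sub hsq).congr' ?_ .rfl
  filter_upwards [eventually_summable_comp_add_nat (p := 1) hstep, eventually_gt_atTop 0]
    with z hsum hz
  have hq := hasSum_mul_ofReal_inv_add_nat_sq ((α - β) * (α + β - 1) / 2) hz
  have hsplit := hsum.tsum_sub hq.summable
  simp only [add_sub_cancel_right, hq.tsum_eq] at hsplit
  rw [hsplit]
  push_cast
  ring

theorem eventually_normalizedGammaRatio_eq_exp (α β : ℂ) :
    ∀ᶠ z in atTop,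
      normalizedGammaRatio α β z = exp (-∑' k : ℕ, gammaRatioLogStep α β (z + k)) := by
  filter_upwards [eventually_summable_gammaRatioLogStep_comp_add_nat α β,
    eventually_gt_atTop (max 0 (max (-α.re) (-β.re)))] with z hsum hz
  simp only [max_lt_iff] at hz
  obtain ⟨hz, hzα, hzβ⟩ := hz
  have hpole {γ : ℂ} (hγ : -γ.re < z) (n : ℕ) : ((z + n : ℝ) : ℂ) + γ ≠ 0 := by
    simpa using ofReal_add_ne_neg_natCast (by linarith [n.cast_nonneg (α := ℝ)] : -γ.re < z + n) 0
  have hstep (n : ℕ) : normalizedGammaRatio α β (z + (n + 1 : ℕ)) =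
      exp (gammaRatioLogStep α β (z + n)) * normalizedGammaRatio α β (z + n) := by
    rw [Nat.cast_succ, ← add_assoc]
    exact normalizedGammaRatio_add_one (by positivity) (hpole hzα n) (hpole hzβ n)
  simpa using eq_exp_neg_tsum_of_tendsto_one hstep hsum <| tendsto_normalizedGammaRatio_add_nat
    hz.le (ofReal_add_ne_neg_natCast hzα) (ofReal_add_ne_neg_natCast hzβ)

theorem Gamma_div_Gamma_eq_cpow_mul_normalizedGammaRatio (α β : ℂ) {z : ℝ} (hz : z ≠ 0) :
    Gamma (z + α) / Gamma (z + β) = (z : ℂ) ^ (α - β) * normalizedGammaRatio α β z := by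
  rw [normalizedGammaRatio, mul_left_comm, ← cpow_add _ _ (ofReal_ne_zero.mpr hz)]
  simp

/-- Two-term asymptotic expansion of the ratio of Gamma functions:
`Γ(z+α)/Γ(z+β) = z^(α-β) (1 + (α-β)(α+β-1)/(2z) + O(z⁻²))` as real `z → ∞`. -/
theorem gamma_ratio_two_term (α β : ℂ) :
    (fun z : ℝ => Complex.Gamma ((z : ℂ) + α) / Complex.Gamma ((z : ℂ) + β) -
        (z : ℂ) ^ (α - β) * (1 + (α - β) * (α + β - 1) / (2 * (z : ℂ))))
      =O[atTop] fun z : ℝ => (z : ℂ) ^ (α - β) / (z : ℂ) ^ 2 := by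
  set c := (α - β) * (α + β - 1) / 2
  set v : ℝ → ℂ := fun z => -∑' k : ℕ, gammaRatioLogStep α β (z + k)
  have hinv : Tendsto (fun z : ℝ => z⁻¹) atTop (𝓝 0) := tendsto_inv_atTop_zero
  have hv : (fun z => v z - c * (z : ℂ)⁻¹) =O[atTop] fun z => z⁻¹ ^ 2 :=
    (isBigO_tsum_gammaRatioLogStep_add α β).neg_left.congr_left fun z => by simp only [v]; ring
  have hv₁ : v =O[atTop] fun z => z⁻¹ := by
    have hsq : (fun z : ℝ => z⁻¹ ^ 2) =O[atTop] fun z => z⁻¹ := by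
      simpa [Function.comp_def] using
        ((isLittleO_pow_pow (𝕜 := ℝ) one_lt_two).comp_tendsto hinv).isBigO
    have hc : (fun z : ℝ => c * (z : ℂ)⁻¹) =O[atTop] fun z => z⁻¹ :=
      (isBigO_ofReal_left.mpr (isBigO_refl _ _)).const_mul_left c |>.congr_left fun z => by simp
    exact ((hv.trans hsq).add hc).congr_left fun z => by ring
  have hE : (fun z => exp (v z) - 1 - c * (z : ℂ)⁻¹) =O[atTop] fun z => z⁻¹ ^ 2 :=
    ((isBigO_exp_sub_one_sub_self hv₁ hinv).add hv).congr_left fun z => by ring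
  refine ((isBigO_refl (fun z : ℝ => (z : ℂ) ^ (α - β)) atTop).mul
    (isBigO_ofReal_right.mpr hE)).congr' ?_ ?_
  · filter_upwards [eventually_normalizedGammaRatio_eq_exp α β, eventually_ne_atTop 0]
      with z hH hz
    rw [Gamma_div_Gamma_eq_cpow_mul_normalizedGammaRatio α β hz, hH]
    ring
  · filter_upwards with z
    push_cast
    ring
end

section
/- For $\sigma > 0$ and $n, N \in \mathbb{N}$, the ratio of generalized Pochhammer symbols satisfies $\frac{[n/\sigma]_{(N^n)}^{(\sigma)}}{[-N]_{(N^n)}^{(\sigma)}} = \frac{(-1)^{nN}\, n!\, (1 + n/\sigma)_{N-1}}{(N-1)!\,(N\sigma)_n}$. -/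
open scoped BigOperators

/-- The generalised Pochhammer symbol `[a]_λ^{(σ)} = ∏_{i=1}^n (a - (i-1)/σ)_{λ_i}`
(here `λ` is indexed from `0`). -/
noncomputable def genPochhammer (σ a : ℝ) (n : ℕ) (lam : ℕ → ℕ) : ℝ :=
  ∏ i ∈ Finset.range n, (ascPochhammer ℝ (lam i)).eval (a - (i : ℝ) / σ)

/-!
Reversing the order of the rows, the numerator is `∏_{j=1}^n (j/σ)_N`, and by the reflection
`(-x - N + 1)_N = (-1)^N (x)_N` the denominator is `(-1)^{nN} ∏_{i=0}^{n-1} (1 + i/σ)_N`.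
Splitting `(x)_N = x (x+1)_{N-1}` in the numerator and `(x)_N = (x)_{N-1} (x+N-1)` in the
denominator leaves `∏ (j/σ) / ∏ (N + i/σ) = n! / (Nσ)_n` times a telescoping product of the
`(1 + i/σ)_{N-1}`, which collapses to `(1 + n/σ)_{N-1} / (N-1)!`.
-/

open Finset Polynomial Nat

theorem ascPochhammer_succ_eval_left {R : Type*} [CommSemiring R] (n : ℕ) (x : R) :
    (ascPochhammer R (n + 1)).eval x = x * (ascPochhammer R n).eval (x + 1) := by
  rw [ascPochhammer_succ_left, eval_mul, eval_X, eval_comp, eval_add, eval_X, eval_one]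

theorem ascPochhammer_eval_neg_sub_add_one {R : Type*} [CommRing R] (n : ℕ) (x : R) :
    (ascPochhammer R n).eval (-x - n + 1) = (-1) ^ n * (ascPochhammer R n).eval x := by
  rw [show -x - n + 1 = -(x + n - 1) by ring, ascPochhammer_eval_neg_eq_descPochhammer,
    descPochhammer_eval_eq_ascPochhammer, show x + n - 1 - n + 1 = x by ring]

theorem ascPochhammer_eval_eq_prod_range {R : Type*} [CommSemiring R] (n : ℕ) (x : R) :
    (ascPochhammer R n).eval x = ∏ i ∈ range n, (x + i) := by
  induction n with
  | zero => simp
  | succ n ih => rw [ascPochhammer_succ_eval, ih, prod_range_succ]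

theorem prod_range_add_div_eq {K : Type*} [Field K] {σ : K} (hσ : σ ≠ 0) (n : ℕ) (a : K) :
    ∏ i ∈ range n, (a + i / σ) = (ascPochhammer K n).eval (a * σ) / σ ^ n := by
  have hterm (i : ℕ) : a + i / σ = (a * σ + i) / σ := by field_simp
  simp only [hterm, prod_div_distrib, prod_const, card_range, ascPochhammer_eval_eq_prod_range]

theorem genPochhammer_natCast_div_rect (σ : ℝ) (n N : ℕ) :
    genPochhammer σ (n / σ) n (fun _ => N) =
      ∏ i ∈ range n, (ascPochhammer ℝ N).eval (1 / σ + i / σ) := by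
  rw [genPochhammer, ← prod_range_reflect]
  refine prod_congr rfl fun i hi => ?_
  have hi : i + 1 ≤ n := mem_range.mp hi
  rw [show n - 1 - i = n - (i + 1) by omega, Nat.cast_sub hi]
  push_cast
  ring_nf

theorem genPochhammer_neg_rect (σ : ℝ) (n N : ℕ) :
    genPochhammer σ (-N) n (fun _ => N) =
      (-1) ^ (n * N) * ∏ i ∈ range n, (ascPochhammer ℝ N).eval (1 + i / σ) := by
  have hreflect (i : ℕ) : (ascPochhammer ℝ N).eval (-N - i / σ) =
      (-1) ^ N * (ascPochhammer ℝ N).eval (1 + i / σ) := by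
    rw [← ascPochhammer_eval_neg_sub_add_one]
    ring_nf
  simp only [genPochhammer, hreflect, prod_mul_distrib, prod_const, card_range, ← pow_mul,
    mul_comm N]

theorem genPochhammer_natCast_div_rect_succ {σ : ℝ} (hσ : σ ≠ 0) (n M : ℕ) :
    genPochhammer σ (n / σ) n (fun _ => M + 1) =
      n ! / σ ^ n * ∏ i ∈ range n, (ascPochhammer ℝ M).eval (1 + ↑(i + 1) / σ) := by
  simp only [genPochhammer_natCast_div_rect, ascPochhammer_succ_eval_left, prod_mul_distrib,
    prod_range_add_div_eq hσ, one_div_mul_cancel hσ, ascPochhammer_eval_one]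
  congr 1
  refine prod_congr rfl fun i _ => ?_
  push_cast
  ring_nf

theorem genPochhammer_neg_rect_succ {σ : ℝ} (hσ : σ ≠ 0) (n M : ℕ) :
    genPochhammer σ (-↑(M + 1)) n (fun _ => M + 1) = (-1) ^ (n * (M + 1)) *
      ((ascPochhammer ℝ n).eval (↑(M + 1) * σ) / σ ^ n *
        ∏ i ∈ range n, (ascPochhammer ℝ M).eval (1 + i / σ)) := by
  have hshift (i : ℕ) : 1 + i / σ + M = ((M + 1 : ℕ) : ℝ) + i / σ := by push_cast; ring
  simp only [genPochhammer_neg_rect, ascPochhammer_succ_eval, prod_mul_distrib, hshift,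
    prod_range_add_div_eq hσ]
  ring

/-- the ratio
`[n/σ]_{(N^n)}^{(σ)} / [-N]_{(N^n)}^{(σ)} = (-1)^{nN} n! (1+n/σ)_{N-1} / ((N-1)! (Nσ)_n)`. -/
theorem genPochhammer_ratio_rect (σ : ℝ) (hσ : 0 < σ) (n N : ℕ) (hN : 1 ≤ N) :
    genPochhammer σ ((n : ℝ) / σ) n (fun _ => N) / genPochhammer σ (-(N : ℝ)) n (fun _ => N) =
      (-1 : ℝ) ^ (n * N) * (n.factorial : ℝ) *
          (ascPochhammer ℝ (N - 1)).eval (1 + (n : ℝ) / σ) /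
        (((N - 1).factorial : ℝ) * (ascPochhammer ℝ n).eval ((N : ℝ) * σ)) := by
  obtain ⟨M, rfl⟩ : ∃ M, N = M + 1 := ⟨N - 1, by omega⟩
  set f : ℕ → ℝ := fun t => (ascPochhammer ℝ M).eval (1 + t / σ) with hf
  set P := (ascPochhammer ℝ n).eval (↑(M + 1) * σ)
  have htelescope : (∏ i ∈ range n, f (i + 1)) * (M ! : ℝ) = (∏ i ∈ range n, f i) * f n := by
    rw [show (M ! : ℝ) = f 0 by simp [hf], ← prod_range_succ', prod_range_succ]
  have hsign : ((-1 : ℝ) ^ (n * (M + 1))) ^ 2 = 1 := by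
    rw [← pow_mul, pow_mul', neg_one_sq, one_pow]
  have hf_prod_pos : 0 < ∏ i ∈ range n, f i :=
    prod_pos fun i _ => ascPochhammer_pos _ _ (by positivity)
  have hP_pos : 0 < P := ascPochhammer_pos _ _ (by positivity)
  rw [genPochhammer_natCast_div_rect_succ hσ.ne', genPochhammer_neg_rect_succ hσ.ne',
    Nat.add_sub_cancel,
    div_eq_div_iff (mul_ne_zero (pow_ne_zero _ (by norm_num)) (by positivity)) (by positivity)]
  linear_combination (n ! / σ ^ n * P) * htelescope -
    (n ! / σ ^ n * P * (∏ i ∈ range n, f i) * f n) * hsign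
end
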